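/- Under the hypotheses of the decomposition bound, if additionally P₁ᵀP₁ = I and P₂ᵀP₂ = I, then D_{P₁⊗P₂,α}(G□⁽¹⁾, G□⁽²⁾) ≤ √(n₂⁽¹⁾)·D_{P₁,α}(G₁⁽¹⁾,G₁⁽²⁾) + √(n₁⁽¹⁾)·D_{P₂,α}(G₂⁽¹⁾,G₂⁽²⁾), where D_{P,α}(G,H) = ‖(1/√α)P·L(G) − √α·L(H)·P‖_F and G□⁽ʲ⁾ = G₁⁽ʲ⁾ □ G₂⁽ʲ⁾. -/

import Mathlib

/-!
The Laplacian of a box product is the Kronecker sum `L₁ ⊗ I + I ⊗ L₂`, so the defect matrix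
`(1/√α) P L(G) - √α L(H) P` of `P₁ ⊗ P₂` splits as `D₁ ⊗ P₂ + P₁ ⊗ D₂`, where `Dᵢ` is the defect
of `Pᵢ`. The Frobenius norm is multiplicative on Kronecker products and equals `√n` on a matrix
with `PᵀP = I` and `n` columns, so the triangle inequality gives the bound.
-/

open Matrix Kronecker

noncomputable def frob {m n : Type*} [Fintype m] [Fintype n] (A : Matrix m n ℝ) : ℝ :=
  Real.sqrt ((Aᵀ * A).trace)

noncomputable def lap {V : Type*} [Fintype V] [DecidableEq V]
    (G : SimpleGraph V) [DecidableRel G.Adj] : Matrix V V ℝ :=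
  G.adjMatrix ℝ - G.degMatrix ℝ

noncomputable def diffDist {m n : Type*} [Fintype m] [DecidableEq m] [Fintype n] [DecidableEq n]
    (G : SimpleGraph m) [DecidableRel G.Adj] (H : SimpleGraph n) [DecidableRel H.Adj]
    (P : Matrix n m ℝ) (α : ℝ) : ℝ :=
  frob ((1 / Real.sqrt α) • (P * lap G) - Real.sqrt α • (lap H * P))

section Frobenius

variable {m n p q : Type*} [Fintype m] [Fintype n] [Fintype p] [Fintype q]

lemma trace_transpose_mul_self_eq_sum_sq (A : Matrix m n ℝ) :
    (Aᵀ * A).trace = ∑ i, ∑ j, A i j ^ 2 := by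
  rw [Finset.sum_comm]
  simp [Matrix.trace, Matrix.mul_apply, sq]

attribute [local instance] Matrix.frobeniusNormedAddCommGroup

lemma frob_eq_frobenius_norm (A : Matrix m n ℝ) : frob A = ‖A‖ := by
  simp only [frob, trace_transpose_mul_self_eq_sum_sq, Matrix.frobenius_norm_def,
    Real.norm_eq_abs, Real.rpow_two, sq_abs, Real.sqrt_eq_rpow]

lemma frob_add_le (A B : Matrix m n ℝ) : frob (A + B) ≤ frob A + frob B := by
  simpa only [frob_eq_frobenius_norm] using norm_add_le A B

lemma frob_kronecker (A : Matrix m n ℝ) (B : Matrix p q ℝ) :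
    frob (A ⊗ₖ B) = frob A * frob B := by
  have hA : 0 ≤ (Aᵀ * A).trace := by
    rw [trace_transpose_mul_self_eq_sum_sq]; positivity
  rw [frob, ← kroneckerMap_transpose, ← mul_kronecker_mul, trace_kronecker, Real.sqrt_mul hA,
    frob, frob]

lemma frob_of_transpose_mul_self_eq_one [DecidableEq n] {P : Matrix m n ℝ} (hP : Pᵀ * P = 1) :
    frob P = Real.sqrt (Fintype.card n) := by
  rw [frob, hP, trace_one]

end Frobenius

namespace Matrix

variable {R m n m' n' : Type*}

lemma sub_kronecker [NonUnitalNonAssocRing R] (A B : Matrix m n R) (C : Matrix m' n' R) :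
    (A - B) ⊗ₖ C = A ⊗ₖ C - B ⊗ₖ C := by
  ext; simp [sub_mul]

lemma kronecker_sub [NonUnitalNonAssocRing R] (A : Matrix m n R) (B C : Matrix m' n' R) :
    A ⊗ₖ (B - C) = A ⊗ₖ B - A ⊗ₖ C := by
  ext; simp [mul_sub]

def kroneckerSum [NonAssocSemiring R] [DecidableEq m] [DecidableEq n]
    (A : Matrix m m R) (B : Matrix n n R) : Matrix (m × n) (m × n) R :=
  A ⊗ₖ 1 + 1 ⊗ₖ B

def intertwiningDefect [Fintype m] [Fintype m'] [NonUnitalNonAssocRing R] (c d : R)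
    (P : Matrix m' m R) (A : Matrix m m R) (A' : Matrix m' m' R) : Matrix m' m R :=
  c • (P * A) - d • (A' * P)

lemma intertwiningDefect_kronecker_kroneckerSum [Fintype m] [Fintype m'] [Fintype n] [Fintype n']
    [DecidableEq m] [DecidableEq m'] [DecidableEq n] [DecidableEq n'] [CommRing R] (c d : R)
    (P : Matrix m' m R) (Q : Matrix n' n R) (A : Matrix m m R) (B : Matrix n n R)
    (A' : Matrix m' m' R) (B' : Matrix n' n' R) :
    intertwiningDefect c d (P ⊗ₖ Q) (kroneckerSum A B) (kroneckerSum A' B') =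
      intertwiningDefect c d P A A' ⊗ₖ Q + P ⊗ₖ intertwiningDefect c d Q B B' := by
  simp only [intertwiningDefect, kroneckerSum, Matrix.mul_add, Matrix.add_mul,
    ← mul_kronecker_mul, Matrix.mul_one, Matrix.one_mul, sub_kronecker, kronecker_sub,
    smul_kronecker, kronecker_smul, smul_add]
  abel

end Matrix

lemma lap_boxProd {m n : Type*} [Fintype m] [DecidableEq m] [Fintype n] [DecidableEq n]
    (G : SimpleGraph m) [DecidableRel G.Adj] (H : SimpleGraph n) [DecidableRel H.Adj]
    [DecidableRel (G □ H).Adj] :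
    lap (G □ H) = kroneckerSum (lap G) (lap H) := by
  ext ⟨x, y⟩ ⟨x', y'⟩
  simp only [lap, kroneckerSum, Matrix.sub_apply, Matrix.add_apply, kroneckerMap_apply,
    SimpleGraph.adjMatrix_apply, SimpleGraph.degMatrix, diagonal_apply, one_apply,
    SimpleGraph.boxProd_adj]
  by_cases hx : x = x' <;> by_cases hy : y = y' <;>
    simp [hx, hy, Prod.ext_iff, SimpleGraph.degree_boxProd]
  ring

lemma diffDist_eq_frob_intertwiningDefect {m n : Type*} [Fintype m] [DecidableEq m] [Fintype n]
    [DecidableEq n] (G : SimpleGraph m) [DecidableRel G.Adj] (H : SimpleGraph n)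
    [DecidableRel H.Adj] (P : Matrix n m ℝ) (α : ℝ) :
    diffDist G H P α = frob (intertwiningDefect (1 / Real.sqrt α) (Real.sqrt α) P (lap G) (lap H)) :=
  rfl

theorem stmt12_general {a₁ a₂ b₁ b₂ : ℕ}
    (G₁₁ : SimpleGraph (Fin a₁)) (G₁₂ : SimpleGraph (Fin a₂))
    (G₂₁ : SimpleGraph (Fin b₁)) (G₂₂ : SimpleGraph (Fin b₂))
    [DecidableRel G₁₁.Adj] [DecidableRel G₁₂.Adj]
    [DecidableRel G₂₁.Adj] [DecidableRel G₂₂.Adj]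
    [DecidableRel (G₁₁ □ G₂₁).Adj] [DecidableRel (G₁₂ □ G₂₂).Adj]
    (P₁ : Matrix (Fin a₂) (Fin a₁) ℝ) (P₂ : Matrix (Fin b₂) (Fin b₁) ℝ)
    (hP₁ : P₁ᵀ * P₁ = 1) (hP₂ : P₂ᵀ * P₂ = 1)
    (α : ℝ) :
    diffDist (G₁₁ □ G₂₁) (G₁₂ □ G₂₂) (P₁ ⊗ₖ P₂) α ≤
      Real.sqrt b₁ * diffDist G₁₁ G₁₂ P₁ α + Real.sqrt a₁ * diffDist G₂₁ G₂₂ P₂ α := by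
  set D₁ := intertwiningDefect (1 / Real.sqrt α) (Real.sqrt α) P₁ (lap G₁₁) (lap G₁₂)
  set D₂ := intertwiningDefect (1 / Real.sqrt α) (Real.sqrt α) P₂ (lap G₂₁) (lap G₂₂)
  have hfP₁ : frob P₁ = Real.sqrt a₁ := by simpa using frob_of_transpose_mul_self_eq_one hP₁
  have hfP₂ : frob P₂ = Real.sqrt b₁ := by simpa using frob_of_transpose_mul_self_eq_one hP₂
  calc diffDist (G₁₁ □ G₂₁) (G₁₂ □ G₂₂) (P₁ ⊗ₖ P₂) α
      = frob (D₁ ⊗ₖ P₂ + P₁ ⊗ₖ D₂) := by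
        rw [diffDist_eq_frob_intertwiningDefect, lap_boxProd, lap_boxProd,
          intertwiningDefect_kronecker_kroneckerSum]
    _ ≤ frob (D₁ ⊗ₖ P₂) + frob (P₁ ⊗ₖ D₂) := frob_add_le _ _
    _ = Real.sqrt b₁ * diffDist G₁₁ G₁₂ P₁ α + Real.sqrt a₁ * diffDist G₂₁ G₂₂ P₂ α := by
        rw [frob_kronecker, frob_kronecker, hfP₁, hfP₂, diffDist_eq_frob_intertwiningDefect,
          diffDist_eq_frob_intertwiningDefect, mul_comm]

theorem stmt12 {a₁ a₂ b₁ b₂ : ℕ}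
    (G₁₁ : SimpleGraph (Fin a₁)) (G₁₂ : SimpleGraph (Fin a₂))
    (G₂₁ : SimpleGraph (Fin b₁)) (G₂₂ : SimpleGraph (Fin b₂))
    [DecidableRel G₁₁.Adj] [DecidableRel G₁₂.Adj]
    [DecidableRel G₂₁.Adj] [DecidableRel G₂₂.Adj]
    [DecidableRel (G₁₁ □ G₂₁).Adj] [DecidableRel (G₁₂ □ G₂₂).Adj]
    (P₁ : Matrix (Fin a₂) (Fin a₁) ℝ) (P₂ : Matrix (Fin b₂) (Fin b₁) ℝ)
    (hP₁ : P₁ᵀ * P₁ = 1) (hP₂ : P₂ᵀ * P₂ = 1)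
    (α : ℝ) (hα : 0 < α) :
    diffDist (G₁₁ □ G₂₁) (G₁₂ □ G₂₂) (P₁ ⊗ₖ P₂) α ≤
      Real.sqrt b₁ * diffDist G₁₁ G₁₂ P₁ α + Real.sqrt a₁ * diffDist G₂₁ G₂₂ P₂ α :=
  stmt12_general G₁₁ G₁₂ G₂₁ G₂₂ P₁ P₂ hP₁ hP₂ α
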